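/- arXiv:2011.06999 — 4 statements merged into one kernel-verified Lean document; each statement's English description precedes it below -/
import Mathlib

section
/- Let μ be a finite measure on a measurable space, H a real Hilbert space, T : H → L²(μ) a compact continuous linear map, Y a real normed vector space, and F : L¹(μ) → Y a continuous map. Fix ε > 0, α > 0, y ∈ Y and φ₀ ∈ H. Then the Tikhonov functional F_{ε,α}(φ) := ‖F(P_ε ∘ (Tφ)) − y‖²_Y + α‖φ − φ₀‖²_H attains a global minimizer on H, i.e. there exists φ* ∈ H with F_{ε,α}(φ*) ≤ F_{ε,α}(φ) for all φ ∈ H. -/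
/-! The direct method. Since `α > 0`, a minimizing sequence `φₙ` is bounded, and compactness of
`T` gives a subsequence with `T φₙ → ψ` in `L²`. In a Hilbert space the closed convex hulls of the
tails of a bounded sequence are nested, and their minimal-norm points `vₙ` satisfy
`‖vₘ - vₙ‖² ≤ ‖vₘ‖² - ‖vₙ‖²` for `n ≤ m`, so they converge to a point `φ*` common to all of them.
A lower semicontinuous convex function is then bounded at `φ*` by its limit along the sequence
(Mazur), which yields `T φ* = ψ` and `α‖φ* - φ₀‖² ≤ lim α‖φₙ - φ₀‖²`. Finally `P_ε` is
`ε⁻¹`-Lipschitz, so `f ↦ P_ε ∘ f` is Lipschitz from `L²(μ)` to `L¹(μ)` for finite `μ`, and the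
data term is continuous in `Tφ`. -/

open MeasureTheory Filter Topology

noncomputable section

/-- The smoothed level set projection `P_ε`. -/
def Pe (ε t : ℝ) : ℝ := max 0 (min 1 (1 + t / ε))

/-- The level set projection `P` (Heaviside function, `P t = 1` iff `0 ≤ t`). -/
def Pstep (t : ℝ) : ℝ := if 0 ≤ t then 1 else 0

lemma Pe_continuous (ε : ℝ) : Continuous (Pe ε) :=
  continuous_const.max (continuous_const.min (continuous_const.add (continuous_id.div_const ε)))

lemma Pe_bound (ε t : ℝ) : ‖Pe ε t‖ ≤ 1 := by
  unfold Pe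
  rw [Real.norm_eq_abs, abs_le]
  refine ⟨by linarith [le_max_left (0:ℝ) (min 1 (1 + t / ε))], ?_⟩
  exact max_le (by norm_num) (min_le_left _ _)

lemma Pstep_measurable : Measurable Pstep :=
  Measurable.ite measurableSet_Ici measurable_const measurable_const

lemma Pstep_bound (t : ℝ) : ‖Pstep t‖ ≤ 1 := by
  unfold Pstep; split <;> simp

variable {X : Type*} [MeasurableSpace X] (μ : Measure X) [IsFiniteMeasure μ]

/-- Composition `P_ε ∘ f` of the smoothed projection with an `L²` function, as an
element of `L¹` (the measure being finite). -/
def compPe (ε : ℝ) (f : Lp ℝ 2 μ) : Lp ℝ 1 μ :=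
  (MemLp.of_bound ((Pe_continuous ε).comp_aestronglyMeasurable (Lp.aestronglyMeasurable f)) 1
    (Eventually.of_forall fun x => Pe_bound ε (f x))).toLp _

/-- Composition `P ∘ f` of the discontinuous projection with an `L²` function, as an
element of `L¹`. -/
def compP (f : Lp ℝ 2 μ) : Lp ℝ 1 μ :=
  (MemLp.of_bound
    (Pstep_measurable.comp_aemeasurable (Lp.aestronglyMeasurable f).aemeasurable).aestronglyMeasurable 1
    (Eventually.of_forall fun x => Pstep_bound (f x))).toLp _

/-- A pair `(z, φ) ∈ L¹ × L²` is admissible if `z` is the `L¹` limit of `P_{ε_k} ∘ φ_k`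
for some positive `ε_k → 0` and some `φ_k → φ` in `L²`. -/
def Admissible (z : Lp ℝ 1 μ) (φ : Lp ℝ 2 μ) : Prop :=
  ∃ (εs : ℕ → ℝ) (φs : ℕ → Lp ℝ 2 μ),
    (∀ k, 0 < εs k) ∧ Tendsto εs atTop (𝓝 0) ∧
    Tendsto φs atTop (𝓝 φ) ∧
    Tendsto (fun k => compPe μ (εs k) (φs k)) atTop (𝓝 z)

open Set
open scoped ENNReal

lemma lipschitzWith_Pe (ε : ℝ) : LipschitzWith ‖ε⁻¹‖₊ (Pe ε) := by
  have haffine : LipschitzWith ‖ε⁻¹‖₊ fun t : ℝ => 1 + t / ε :=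
    LipschitzWith.of_dist_le_mul fun s t => by
      rw [Real.dist_eq, Real.dist_eq, coe_nnnorm, Real.norm_eq_abs, ← abs_mul]
      exact (congrArg abs (by ring)).le
  exact (haffine.const_min 1).const_max 0

lemma coeFn_compPe (ε : ℝ) (f : Lp ℝ 2 μ) : compPe μ ε f =ᵐ[μ] fun x => Pe ε (f x) :=
  MemLp.coeFn_toLp _

lemma lipschitzWith_compPe (ε : ℝ) :
    LipschitzWith (‖ε⁻¹‖₊ * (μ univ ^ (1 / 2 : ℝ)).toNNReal) (compPe μ ε) := by
  intro f g
  have hcoe : ⇑(compPe μ ε f) - ⇑(compPe μ ε g) =ᵐ[μ] fun x => Pe ε (f x) - Pe ε (g x) :=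
    (coeFn_compPe μ ε f).sub (coeFn_compPe μ ε g)
  rw [Lp.edist_def, Lp.edist_def, eLpNorm_congr_ae hcoe, ENNReal.coe_mul,
    ENNReal.coe_toNNReal (by finiteness), mul_assoc]
  calc eLpNorm (fun x => Pe ε (f x) - Pe ε (g x)) 1 μ
      ≤ ‖ε⁻¹‖₊ * eLpNorm (⇑f - ⇑g) 1 μ :=
        eLpNorm_le_mul_eLpNorm_of_ae_le_mul' (ae_of_all _ fun x => by
          simpa only [edist_eq_enorm_sub, Pi.sub_apply] using
            (lipschitzWith_Pe ε).edist_le_mul (f x) (g x)) 1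
    _ ≤ ‖ε⁻¹‖₊ * (μ univ ^ (1 / 2 : ℝ) * eLpNorm (⇑f - ⇑g) 2 μ) := by
        rw [mul_comm (μ univ ^ _)]
        gcongr
        have h := eLpNorm_le_eLpNorm_mul_rpow_measure_univ (p := 1) (q := 2) (by norm_num)
          ((Lp.aestronglyMeasurable f).sub (Lp.aestronglyMeasurable g))
        rwa [show 1 / (1 : ℝ≥0∞).toReal - 1 / (2 : ℝ≥0∞).toReal = 1 / 2 by norm_num] at h

section Hilbert

variable {H : Type*} [NormedAddCommGroup H] [InnerProductSpace ℝ H]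

lemma exists_mem_forall_norm_sub_sq_le {K : Set H} (hne : K.Nonempty) (hc : IsComplete K)
    (hK : Convex ℝ K) : ∃ v ∈ K, ∀ x ∈ K, ‖x - v‖ ^ 2 ≤ ‖x‖ ^ 2 - ‖v‖ ^ 2 := by
  obtain ⟨v, hv, hmin⟩ := exists_norm_eq_iInf_of_complete_convex hne hc hK 0
  refine ⟨v, hv, fun x hx => ?_⟩
  have hinner := (norm_eq_iInf_iff_real_inner_le_zero hK hv).1 hmin x hx
  have hx : ‖x‖ ^ 2 = ‖v‖ ^ 2 + 2 * inner ℝ v (x - v) + ‖x - v‖ ^ 2 := by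
    rw [← norm_add_sq_real, add_sub_cancel]
  rw [zero_sub, inner_neg_left] at hinner
  linarith

variable [CompleteSpace H]

theorem nonempty_iInter_of_antitone_of_convex {C : ℕ → Set H} (hanti : Antitone C)
    (hne : ∀ n, (C n).Nonempty) (hcl : ∀ n, IsClosed (C n)) (hconv : ∀ n, Convex ℝ (C n))
    (hbdd : Bornology.IsBounded (C 0)) : (⋂ n, C n).Nonempty := by
  choose v hvC hv using fun n =>
    exists_mem_forall_norm_sub_sq_le (hne n) (hcl n).isComplete (hconv n)
  have hsq_dist : ∀ n m, n ≤ m → ‖v m - v n‖ ^ 2 ≤ ‖v m‖ ^ 2 - ‖v n‖ ^ 2 :=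
    fun n m h => hv n _ (hanti h (hvC m))
  have hmono : Monotone fun n => ‖v n‖ ^ 2 := fun n m h => by
    linarith [hsq_dist n m h, sq_nonneg ‖v m - v n‖]
  obtain ⟨R, hR⟩ := hbdd.exists_norm_le
  have hbddA : BddAbove (range fun n => ‖v n‖ ^ 2) := ⟨R ^ 2, forall_mem_range.2 fun n =>
    pow_le_pow_left₀ (norm_nonneg _) (hR _ (hanti (Nat.zero_le n) (hvC n))) 2⟩
  have hcauchy : CauchySeq v := by
    rw [Metric.cauchySeq_iff']
    intro δ hδ
    obtain ⟨N, hN⟩ := ((tendsto_atTop_ciSup hmono hbddA).eventually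
      (lt_mem_nhds (sub_lt_self _ (pow_pos hδ 2)))).exists
    refine ⟨N, fun n hn => ?_⟩
    have : dist (v n) (v N) ^ 2 < δ ^ 2 := by
      rw [dist_eq_norm]
      linarith [hsq_dist N n hn, le_ciSup hbddA n]
    exact lt_of_pow_lt_pow_left₀ 2 hδ.le this
  obtain ⟨p, hp⟩ := cauchySeq_tendsto_of_complete hcauchy
  exact ⟨p, mem_iInter.2 fun n => (hcl n).mem_of_tendsto hp
    (eventually_atTop.2 ⟨n, fun m hm => hanti hm (hvC m)⟩)⟩

theorem exists_forall_mem_closure_convexHull_image_Ici {u : ℕ → H}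
    (hu : Bornology.IsBounded (range u)) :
    ∃ p, ∀ n, p ∈ closure (convexHull ℝ (u '' Ici n)) := by
  have hanti : Antitone fun n => closure (convexHull ℝ (u '' Ici n)) := fun n m h =>
    closure_mono (convexHull_mono (image_mono (Ici_subset_Ici.2 h)))
  obtain ⟨p, hp⟩ := nonempty_iInter_of_antitone_of_convex hanti
    (fun n => ⟨u n, subset_closure (subset_convexHull ℝ _ (mem_image_of_mem u self_mem_Ici))⟩)
    (fun n => isClosed_closure) (fun n => (convex_convexHull ℝ _).closure)
    (isBounded_convexHull.2 (hu.subset (image_subset_range u _))).closure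
  exact ⟨p, mem_iInter.1 hp⟩

end Hilbert

theorem ConvexOn.le_of_tendsto_of_forall_mem_closure_convexHull {E : Type*} [TopologicalSpace E]
    [AddCommGroup E] [Module ℝ E] {g : E → ℝ} (hg : ConvexOn ℝ univ g)
    (hlsc : LowerSemicontinuous g) {u : ℕ → E} {p : E}
    (hp : ∀ n, p ∈ closure (convexHull ℝ (u '' Ici n))) {L : ℝ}
    (hL : Tendsto (g ∘ u) atTop (𝓝 L)) : g p ≤ L := by
  refine le_of_forall_gt_imp_ge_of_dense fun c hc => ?_
  obtain ⟨N, hN⟩ := eventually_atTop.1 (hL.eventually (gt_mem_nhds hc))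
  have hsub : closure (convexHull ℝ (u '' Ici N)) ⊆ g ⁻¹' Iic c := by
    refine closure_minimal (convexHull_min ?_ ?_) (hlsc.isClosed_preimage c)
    · rintro - ⟨n, hn, rfl⟩
      exact (hN n hn).le
    · simpa [preimage, Iic] using hg.convex_le c
  exact hsub (hp N)

theorem IsCompactOperator.exists_forall_le_comp_add_mul_norm_sub_sq
    {H : Type*} [NormedAddCommGroup H] [InnerProductSpace ℝ H] [CompleteSpace H]
    {E : Type*} [NormedAddCommGroup E] [NormedSpace ℝ E]
    {T : H →L[ℝ] E} (hT : IsCompactOperator T) {G : E → ℝ} (hGc : Continuous G)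
    (hGb : BddBelow (range G)) {α : ℝ} (hα : 0 < α) (φ₀ : H) :
    ∃ p : H, ∀ φ : H, G (T p) + α * ‖p - φ₀‖ ^ 2 ≤ G (T φ) + α * ‖φ - φ₀‖ ^ 2 := by
  set J : H → ℝ := fun φ => G (T φ) + α * ‖φ - φ₀‖ ^ 2
  obtain ⟨b, hb⟩ := hGb
  have hJb : ∀ φ, b ≤ J φ := fun φ =>
    le_add_of_le_of_nonneg (hb (mem_range_self _)) (by positivity)
  have hJbdd : BddBelow (range J) := ⟨b, forall_mem_range.2 hJb⟩
  obtain ⟨s, hs_anti, hs_lim, hs_mem⟩ := exists_seq_tendsto_sInf (range_nonempty J) hJbdd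
  choose u hu using hs_mem
  have hbdd : Bornology.IsBounded (range u) := by
    refine (Metric.isBounded_closedBall (x := φ₀) (r := √((s 0 - b) / α))).subset ?_
    rintro - ⟨n, rfl⟩
    rw [Metric.mem_closedBall, dist_eq_norm]
    refine Real.le_sqrt_of_sq_le ((le_div_iff₀' hα).2 ?_)
    linarith [hb (mem_range_self (T (u n))), hu n, hs_anti (Nat.zero_le n)]
  obtain ⟨K, hK, hTK⟩ := hT.image_subset_compact_of_bounded hbdd
  obtain ⟨ψ, -, σ, hσ, hψ⟩ :=
    hK.tendsto_subseq fun n => hTK (mem_image_of_mem T (mem_range_self n))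
  obtain ⟨p, hp⟩ :=
    exists_forall_mem_closure_convexHull_image_Ici (hbdd.subset (range_comp_subset_range σ u))
  have hTp : T p = ψ := by
    refine dist_le_zero.1 (((convexOn_dist ψ convex_univ).comp_linearMap
      (T : H →ₗ[ℝ] E)).le_of_tendsto_of_forall_mem_closure_convexHull
      (T.continuous.dist continuous_const).lowerSemicontinuous hp
      (tendsto_iff_dist_tendsto_zero.1 hψ))
  have hreg : α * ‖p - φ₀‖ ^ 2 ≤ sInf (range J) - G ψ := by
    have hconv : ConvexOn ℝ univ fun x : H => α * ‖x - φ₀‖ ^ 2 := by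
      simpa [dist_eq_norm] using
        ((convexOn_dist φ₀ convex_univ).pow (fun x _ => dist_nonneg) 2).smul hα.le
    refine hconv.le_of_tendsto_of_forall_mem_closure_convexHull
      (Continuous.lowerSemicontinuous (by fun_prop)) hp ?_
    refine ((hs_lim.comp hσ.tendsto_atTop).sub ((hGc.tendsto ψ).comp hψ)).congr fun n => ?_
    simp [← hu, J]
  refine ⟨p, fun φ => ?_⟩
  calc G (T p) + α * ‖p - φ₀‖ ^ 2 ≤ sInf (range J) := by rw [hTp]; linarith
    _ ≤ J φ := csInf_le hJbdd (mem_range_self φ)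

theorem tikhonov_smoothed_attains_minimizer_general
    {X : Type*} [MeasurableSpace X] (μ : Measure X) [IsFiniteMeasure μ]
    {H : Type*} [NormedAddCommGroup H] [InnerProductSpace ℝ H] [CompleteSpace H]
    {Y : Type*} [NormedAddCommGroup Y] [NormedSpace ℝ Y]
    (T : H →L[ℝ] Lp ℝ 2 μ) (hT : IsCompactOperator T)
    (F : Lp ℝ 1 μ → Y) (hF : Continuous F)
    (ε α : ℝ) (hα : 0 < α) (y : Y) (φ₀ : H) :
    ∃ φstar : H, ∀ φ : H,
      ‖F (compPe μ ε (T φstar)) - y‖ ^ 2 + α * ‖φstar - φ₀‖ ^ 2 ≤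
      ‖F (compPe μ ε (T φ)) - y‖ ^ 2 + α * ‖φ - φ₀‖ ^ 2 := by
  exact hT.exists_forall_le_comp_add_mul_norm_sub_sq (G := fun z => ‖F (compPe μ ε z) - y‖ ^ 2)
    (((hF.comp (lipschitzWith_compPe μ ε).continuous).sub continuous_const).norm.pow 2)
    ⟨0, forall_mem_range.2 fun _ => sq_nonneg _⟩ hα φ₀

/-- **Theorem 2.1** (existence of a minimizer of the smoothed Tikhonov functional).
For a finite measure `μ`, a compact continuous linear map `T` from a real Hilbert
space `H` into `L²(μ)`, a continuous map `F : L¹(μ) → Y`, and parameters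
`ε, α > 0`, the functional
`φ ↦ ‖F(P_ε ∘ (Tφ)) − y‖² + α‖φ − φ₀‖²` attains a global minimizer on `H`. -/
theorem tikhonov_smoothed_attains_minimizer
    {X : Type*} [MeasurableSpace X] (μ : Measure X) [IsFiniteMeasure μ]
    {H : Type*} [NormedAddCommGroup H] [InnerProductSpace ℝ H] [CompleteSpace H]
    {Y : Type*} [NormedAddCommGroup Y] [NormedSpace ℝ Y]
    (T : H →L[ℝ] Lp ℝ 2 μ) (hT : IsCompactOperator T)
    (F : Lp ℝ 1 μ → Y) (hF : Continuous F)
    (ε α : ℝ) (hε : 0 < ε) (hα : 0 < α) (y : Y) (φ₀ : H) :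
    ∃ φstar : H, ∀ φ : H,
      ‖F (compPe μ ε (T φstar)) - y‖ ^ 2 + α * ‖φstar - φ₀‖ ^ 2 ≤
      ‖F (compPe μ ε (T φ)) - y‖ ^ 2 + α * ‖φ - φ₀‖ ^ 2 :=
  tikhonov_smoothed_attains_minimizer_general μ T hT F hF ε α hα y φ₀
end
end

section
/- Let μ be a finite measure and f ∈ L²(μ). Set φ_k := (1/k) f and ε_k := 1/k². Then φ_k → 0 in L²(μ), ε_k → 0, and P_{ε_k} ∘ φ_k → P ∘ f in L¹(μ). Consequently the pair (P ∘ f, 0) is admissible. -/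
open MeasureTheory Filter Topology

noncomputable section

variable {X : Type*} [MeasurableSpace X] (μ : Measure X) [IsFiniteMeasure μ]

/-! Rescaling both the level and the argument leaves `P_ε` unchanged, `P_{a ε}(a t) = P_ε(t)`, so
`P_{1/k²} ∘ (f/k) = P_{1/k} ∘ f`. As `ε → 0⁺`, `P_ε(t) → P(t)` for every `t` (for `t ≥ 0` it is
constantly `1`, for `t < 0` eventually `0`), and `|P_ε| ≤ 1` is integrable on a finite measure space,
so dominated convergence gives `P_{1/k} ∘ f → P ∘ f` in `L¹`. -/

lemma Pe_mul_mul_left {a : ℝ} (ha : a ≠ 0) (ε t : ℝ) : Pe (a * ε) (a * t) = Pe ε t := by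
  rw [Pe, Pe, mul_div_mul_left _ _ ha]

lemma tendsto_Pe_nhdsGT_zero (t : ℝ) :
    Tendsto (fun ε => Pe ε t) (𝓝[>] 0) (𝓝 (Pstep t)) := by
  rcases le_or_gt 0 t with ht | ht
  · have hone : ∀ᶠ ε in 𝓝[>] (0 : ℝ), Pe ε t = 1 := by
      filter_upwards [self_mem_nhdsWithin] with ε hε
      have : 0 ≤ t / ε := div_nonneg ht (le_of_lt hε)
      simp [Pe, this]
    rw [Pstep, if_pos ht]
    exact tendsto_const_nhds.congr' (hone.mono fun _ h => h.symm)
  · have hbot : Tendsto (fun ε => 1 + t / ε) (𝓝[>] 0) atBot := by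
      simp_rw [div_eq_mul_inv]
      exact tendsto_atBot_add_const_left _ 1 (tendsto_inv_nhdsGT_zero.const_mul_atTop_of_neg ht)
    have hzero : ∀ᶠ ε in 𝓝[>] (0 : ℝ), Pe ε t = 0 := by
      filter_upwards [hbot.eventually (eventually_le_atBot 0)] with ε hε
      rw [Pe, min_eq_right (hε.trans zero_le_one), max_eq_left hε]
    rw [Pstep, if_neg ht.not_ge]
    exact tendsto_const_nhds.congr' (hzero.mono fun _ h => h.symm)

lemma tendsto_toLp_one_of_dominated_convergence {α E : Type*} [MeasurableSpace α]
    {ν : Measure α} [NormedAddCommGroup E] {F : ℕ → α → E} {G : α → E} {bound : α → ℝ}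
    (hF : ∀ n, MemLp (F n) 1 ν) (hG : MemLp G 1 ν) (h_int : Integrable bound ν)
    (h_bound : ∀ n, ∀ᵐ x ∂ν, ‖F n x‖ ≤ bound x)
    (h_lim : ∀ᵐ x ∂ν, Tendsto (fun n => F n x) atTop (𝓝 (G x))) :
    Tendsto (fun n => (hF n).toLp (F n)) atTop (𝓝 (hG.toLp G)) := by
  rw [Lp.tendsto_Lp_iff_tendsto_eLpNorm'' F hF G hG]
  simpa only [eLpNorm_one_eq_lintegral_enorm, ofReal_norm, Pi.sub_apply] using
    tendsto_lintegral_norm_of_dominated_convergence (fun n => (hF n).1) h_int.2 h_bound h_lim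

lemma compPe_mul_smul {a : ℝ} (ha : a ≠ 0) (ε : ℝ) (φ : Lp ℝ 2 μ) :
    compPe μ (a * ε) (a • φ) = compPe μ ε φ := by
  rw [compPe, compPe, MemLp.toLp_eq_toLp_iff]
  filter_upwards [Lp.coeFn_smul a φ] with x hx
  rw [hx, Pi.smul_apply, smul_eq_mul, Pe_mul_mul_left ha]

lemma tendsto_compPe_compP {εs : ℕ → ℝ} (hε : Tendsto εs atTop (𝓝[>] 0)) (f : Lp ℝ 2 μ) :
    Tendsto (fun k => compPe μ (εs k) f) atTop (𝓝 (compP μ f)) :=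
  tendsto_toLp_one_of_dominated_convergence _ _ (integrable_const 1)
    (fun _ => Eventually.of_forall fun _ => Pe_bound _ _)
    (Eventually.of_forall fun x => (tendsto_Pe_nhdsGT_zero (f x)).comp hε)

/-- Example, item 2: for `f ∈ L²(μ)`, setting `φ_k := f/k` and `ε_k := 1/k²`
(indexed so that `k ≥ 1`), one has `φ_k → 0` in `L²(μ)`, `ε_k → 0`, and
`P_{ε_k} ∘ φ_k → P ∘ f` in `L¹(μ)`; consequently the pair `(P ∘ f, 0)` is
admissible. -/
theorem pair_compP_zero_admissible
    {X : Type*} [MeasurableSpace X] (μ : Measure X) [IsFiniteMeasure μ]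
    (f : Lp ℝ 2 μ) :
    Tendsto (fun k : ℕ => ((k : ℝ) + 1)⁻¹ • f) atTop (𝓝 (0 : Lp ℝ 2 μ)) ∧
    Tendsto (fun k : ℕ => (((k : ℝ) + 1) ^ 2)⁻¹) atTop (𝓝 (0 : ℝ)) ∧
    Tendsto (fun k : ℕ => compPe μ ((((k : ℝ) + 1) ^ 2)⁻¹) (((k : ℝ) + 1)⁻¹ • f))
      atTop (𝓝 (compP μ f)) ∧
    Admissible μ (compP μ f) 0 := by
  have hinv : Tendsto (fun k : ℕ => ((k : ℝ) + 1)⁻¹) atTop (𝓝[>] 0) :=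
    tendsto_nhdsWithin_iff.mpr
      ⟨by simpa [one_div] using tendsto_one_div_add_atTop_nhds_zero_nat (𝕜 := ℝ),
        Eventually.of_forall fun k => Set.mem_Ioi.mpr (by positivity)⟩
  have hφ : Tendsto (fun k : ℕ => ((k : ℝ) + 1)⁻¹ • f) atTop (𝓝 0) := by
    simpa using (hinv.mono_right nhdsWithin_le_nhds).smul_const f
  have hε : Tendsto (fun k : ℕ => (((k : ℝ) + 1) ^ 2)⁻¹) atTop (𝓝 0) := by
    simpa [inv_pow] using (hinv.mono_right nhdsWithin_le_nhds).pow 2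
  have hP : Tendsto (fun k : ℕ => compPe μ ((((k : ℝ) + 1) ^ 2)⁻¹) (((k : ℝ) + 1)⁻¹ • f))
      atTop (𝓝 (compP μ f)) := by
    have hrescale (k : ℕ) : compPe μ ((((k : ℝ) + 1) ^ 2)⁻¹) (((k : ℝ) + 1)⁻¹ • f)
        = compPe μ ((k : ℝ) + 1)⁻¹ f := by
      rw [sq, mul_inv, compPe_mul_smul μ (by positivity)]
    simpa only [hrescale] using tendsto_compPe_compP μ hinv f
  exact ⟨hφ, hε, hP, _, _, fun k => by positivity, hε, hφ, hP⟩
end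
end

section
/- Let μ be a finite measure. The set of admissible pairs is sequentially closed in L¹(μ) × L²(μ): if (z_k, φ_k) is a sequence of admissible pairs with z_k → z in L¹(μ) and φ_k → φ in L²(μ), then (z, φ) is admissible. -/
open MeasureTheory Filter Topology

noncomputable section

variable {X : Type*} [MeasurableSpace X] (μ : Measure X) [IsFiniteMeasure μ]

/- Since `ℝ × L² × L¹` is metrizable, sequential closures are closures, so admissibility is
membership in a closed set and the paper's diagonal argument is not needed. -/
def admissibleGraph : Set (ℝ × Lp ℝ 2 μ × Lp ℝ 1 μ) :=
  {p | 0 < p.1 ∧ p.2.2 = compPe μ p.1 p.2.1}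

variable {μ} in
lemma admissible_iff_mem_closure_admissibleGraph (z : Lp ℝ 1 μ) (φ : Lp ℝ 2 μ) :
    Admissible μ z φ ↔ ((0 : ℝ), φ, z) ∈ closure (admissibleGraph μ) := by
  rw [mem_closure_iff_seq_limit]
  constructor
  · rintro ⟨εs, φs, hpos, hε, hφ, hz⟩
    exact ⟨fun k => (εs k, φs k, compPe μ (εs k) (φs k)), fun k => ⟨hpos k, rfl⟩,
      hε.prodMk_nhds (hφ.prodMk_nhds hz)⟩
  · rintro ⟨p, hp, hlim⟩
    exact ⟨fun k => (p k).1, fun k => (p k).2.1, fun k => (hp k).1, hlim.fst_nhds,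
      hlim.snd_nhds.fst_nhds, hlim.snd_nhds.snd_nhds.congr fun k => (hp k).2⟩

/-- Step 3 of the proof of Theorem 3.2: the set of admissible pairs is sequentially
closed in `L¹(μ) × L²(μ)`: if `(z_k, φ_k)` are admissible pairs with `z_k → z` in
`L¹(μ)` and `φ_k → φ` in `L²(μ)`, then `(z, φ)` is admissible. -/
theorem admissible_seqClosed
    {X : Type*} [MeasurableSpace X] (μ : Measure X) [IsFiniteMeasure μ]
    (zs : ℕ → Lp ℝ 1 μ) (φs : ℕ → Lp ℝ 2 μ) (z : Lp ℝ 1 μ) (φ : Lp ℝ 2 μ)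
    (hadm : ∀ k, Admissible μ (zs k) (φs k))
    (hz : Tendsto zs atTop (𝓝 z)) (hφ : Tendsto φs atTop (𝓝 φ)) :
    Admissible μ z φ := by
  rw [admissible_iff_mem_closure_admissibleGraph]
  refine isClosed_closure.mem_of_tendsto (tendsto_const_nhds.prodMk_nhds (hφ.prodMk_nhds hz)) ?_
  exact Eventually.of_forall fun k => (admissible_iff_mem_closure_admissibleGraph _ _).1 (hadm k)
end
end

section
/- Let μ be a finite measure, Y a real normed vector space, F : L¹(μ) → Y continuous, A a nonempty sequentially closed subset of L¹(μ) × L²(μ), and ρ : L¹(μ) × L²(μ) → [0, ∞] sequentially lower semicontinuous with sequentially compact sublevel sets {(z, φ) ∈ A : ρ(z, φ) ≤ c}. Assume there exists (z̃, φ̃) ∈ A with F(z̃) = y and ρ(z̃, φ̃) < ∞. Let δ_k > 0 with δ_k → 0, let y^{δ_k} ∈ Y satisfy ‖y^{δ_k} − y‖_Y ≤ δ_k, and let α_k > 0 satisfy α_k → 0 and δ_k²/α_k → 0. For each k let (z_k, φ_k) ∈ A be a global minimizer over A of G_{α_k}(z, φ) := ‖F(z) − y^{δ_k}‖²_Y +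 α_k·ρ(z, φ). Then there is a subsequence of (z_k, φ_k) converging in L¹(μ) × L²(μ) to a minimum norm solution, i.e. to a pair (z†, φ†) ∈ A with F(z†) = y and ρ(z†, φ†) = inf { ρ(z, φ) : (z, φ) ∈ A, F(z) = y }. -/
open MeasureTheory Filter Topology

noncomputable section

/-- Theorem 3.4 (Convergence, abstract form): under the standing assumptions on `F`, `A`
and `ρ`, let `δ_k → 0` be positive noise levels, `y^{δ_k}` data with `‖y^{δ_k} − y‖ ≤ δ_k`,
and `α_k > 0` regularization parameters with `α_k → 0` and `δ_k²/α_k → 0`. If `(z_k, φ_k)`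
is a global minimizer over `A` of `G_{α_k}(z, φ) = ‖F z − y^{δ_k}‖² + α_k ρ(z, φ)`, then a
subsequence of `(z_k, φ_k)` converges in `L¹(μ) × L²(μ)` to a minimum norm solution. -/
theorem regularized_minimizers_subconverge_to_minimum_norm_solution
    {X : Type*} [MeasurableSpace X] (μ : Measure X) [IsFiniteMeasure μ]
    {Y : Type*} [NormedAddCommGroup Y] [NormedSpace ℝ Y]
    (F : Lp ℝ 1 μ → Y) (hF : Continuous F)
    (A : Set (Lp ℝ 1 μ × Lp ℝ 2 μ)) (hne : A.Nonempty) (hcl : IsSeqClosed A)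
    (ρ : Lp ℝ 1 μ × Lp ℝ 2 μ → ENNReal)
    (hlsc : ∀ (ps : ℕ → Lp ℝ 1 μ × Lp ℝ 2 μ) (p : Lp ℝ 1 μ × Lp ℝ 2 μ),
      Tendsto ps atTop (𝓝 p) → ρ p ≤ Filter.liminf (fun n => ρ (ps n)) atTop)
    (hcpt : ∀ c : ℝ, 0 ≤ c → IsSeqCompact {p | p ∈ A ∧ ρ p ≤ ENNReal.ofReal c})
    (y : Y) (hsol : ∃ p ∈ A, F p.1 = y ∧ ρ p ≠ ⊤)
    (δ : ℕ → ℝ) (hδpos : ∀ k, 0 < δ k) (hδ : Tendsto δ atTop (𝓝 0))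
    (yδ : ℕ → Y) (hyδ : ∀ k, ‖yδ k - y‖ ≤ δ k)
    (α : ℕ → ℝ) (hαpos : ∀ k, 0 < α k) (hα : Tendsto α atTop (𝓝 0))
    (hδα : Tendsto (fun k => δ k ^ 2 / α k) atTop (𝓝 0))
    (m : ℕ → Lp ℝ 1 μ × Lp ℝ 2 μ) (hmA : ∀ k, m k ∈ A)
    (hmin : ∀ k, ∀ p ∈ A,
      ENNReal.ofReal (‖F (m k).1 - yδ k‖ ^ 2) + ENNReal.ofReal (α k) * ρ (m k) ≤
      ENNReal.ofReal (‖F p.1 - yδ k‖ ^ 2) + ENNReal.ofReal (α k) * ρ p) :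
    ∃ (ψ : ℕ → ℕ), StrictMono ψ ∧
      ∃ mdag ∈ A, F mdag.1 = y ∧
        ρ mdag = ⨅ q : { q : Lp ℝ 1 μ × Lp ℝ 2 μ // q ∈ A ∧ F q.1 = y }, ρ q.1 ∧
        Tendsto (fun k => m (ψ k)) atTop (𝓝 mdag) := by

  classical
  obtain ⟨pt, hptA, hpty, hptρ⟩ := hsol
  have hyδ' : ∀ k, ‖y - yδ k‖ ≤ δ k := fun k => by
    rw [norm_sub_rev]; exact hyδ k
  -- key inequality against any solution q
  have hkey : ∀ j, ∀ q ∈ A, F q.1 = y →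
      ρ (m j) ≤ ENNReal.ofReal (δ j ^ 2 / α j) + ρ q := by
    intro j q hqA hqy
    have h1 := hmin j q hqA
    rw [hqy] at h1
    have h2 : ENNReal.ofReal (α j) * ρ (m j) ≤
        ENNReal.ofReal (δ j ^ 2) + ENNReal.ofReal (α j) * ρ q := by
      calc ENNReal.ofReal (α j) * ρ (m j)
          ≤ ENNReal.ofReal (‖F (m j).1 - yδ j‖ ^ 2) + ENNReal.ofReal (α j) * ρ (m j) :=
            le_add_self
        _ ≤ ENNReal.ofReal (‖y - yδ j‖ ^ 2) + ENNReal.ofReal (α j) * ρ q := h1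
        _ ≤ ENNReal.ofReal (δ j ^ 2) + ENNReal.ofReal (α j) * ρ q := by
            gcongr
            exact hyδ' j
    have hα0 : ENNReal.ofReal (α j) ≠ 0 := by
      simp [ENNReal.ofReal_eq_zero, not_le, hαpos j]
    rw [← ENNReal.mul_le_mul_iff_right hα0 ENNReal.ofReal_ne_top, mul_add,
      ← ENNReal.ofReal_mul (hαpos j).le]
    have hc : α j * (δ j ^ 2 / α j) = δ j ^ 2 := by
      field_simp
      exact mul_div_cancel_left₀ _ (hαpos j).ne'
    rw [hc]
    exact h2
  -- eventual sublevel bound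
  have hev : ∀ᶠ j in atTop, δ j ^ 2 / α j ≤ 1 :=
    hδα.eventually (eventually_le_nhds one_pos)
  obtain ⟨N, hN⟩ := eventually_atTop.mp hev
  set c : ℝ := (ρ pt).toReal + 1 with hcdef
  have hc0 : (0:ℝ) ≤ c := by positivity
  have hmem : ∀ n, m (n + N) ∈ {p | p ∈ A ∧ ρ p ≤ ENNReal.ofReal c} := by
    intro n
    refine ⟨hmA _, ?_⟩
    have h1 : ρ (m (n + N)) ≤ ENNReal.ofReal (δ (n + N) ^ 2 / α (n + N)) + ρ pt :=
      hkey _ pt hptA hpty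
    have h2 : ENNReal.ofReal (δ (n + N) ^ 2 / α (n + N)) ≤ ENNReal.ofReal 1 :=
      ENNReal.ofReal_le_ofReal (hN _ (Nat.le_add_left N n))
    calc ρ (m (n + N)) ≤ ENNReal.ofReal (δ (n + N) ^ 2 / α (n + N)) + ρ pt := h1
      _ ≤ ENNReal.ofReal 1 + ENNReal.ofReal ((ρ pt).toReal) := by
          gcongr
          rw [ENNReal.ofReal_toReal hptρ]
      _ = ENNReal.ofReal c := by
          rw [← ENNReal.ofReal_add one_pos.le ENNReal.toReal_nonneg, hcdef, add_comm]
  obtain ⟨mdag, hmdagmem, ψ, hψ, htend⟩ := hcpt c hc0 hmem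
  obtain ⟨hmdagA, _⟩ := hmdagmem
  set Ψ : ℕ → ℕ := fun n => ψ n + N with hΨdef
  have hΨ : StrictMono Ψ := fun a b h => Nat.add_lt_add_right (hψ h) N
  have htend' : Tendsto (fun n => m (Ψ n)) atTop (𝓝 mdag) := htend
  have hΨtop : Tendsto Ψ atTop atTop := hΨ.tendsto_atTop
  -- residual bound
  set b : ℕ → ℝ := fun j => δ j ^ 2 + α j * (ρ pt).toReal with hbdef
  have hb0 : Tendsto b atTop (𝓝 0) := by
    have h1 : Tendsto (fun j => δ j ^ 2) atTop (𝓝 0) := by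
      have := hδ.pow 2
      simpa using this
    have h2 : Tendsto (fun j => α j * (ρ pt).toReal) atTop (𝓝 0) := by
      have := hα.mul_const ((ρ pt).toReal)
      simpa using this
    simpa using h1.add h2
  have hres : ∀ j, ‖F (m j).1 - yδ j‖ ^ 2 ≤ b j := by
    intro j
    have h1 := hmin j pt hptA
    rw [hpty] at h1
    have h2 : ENNReal.ofReal (‖F (m j).1 - yδ j‖ ^ 2) ≤ ENNReal.ofReal (b j) := by
      calc ENNReal.ofReal (‖F (m j).1 - yδ j‖ ^ 2)
          ≤ ENNReal.ofReal (‖F (m j).1 - yδ j‖ ^ 2) + ENNReal.ofReal (α j) * ρ (m j) :=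
            le_self_add
        _ ≤ ENNReal.ofReal (‖y - yδ j‖ ^ 2) + ENNReal.ofReal (α j) * ρ pt := h1
        _ ≤ ENNReal.ofReal (δ j ^ 2) + ENNReal.ofReal (α j) * ρ pt := by
            gcongr
            exact hyδ' j
        _ = ENNReal.ofReal (b j) := by
            rw [hbdef]
            rw [ENNReal.ofReal_add (sq_nonneg _)
              (mul_nonneg (hαpos j).le ENNReal.toReal_nonneg),
              ENNReal.ofReal_mul (hαpos j).le, ENNReal.ofReal_toReal hptρ]
    have hbnn : 0 ≤ b j := by
      have : (0:ℝ) ≤ α j * (ρ pt).toReal := mul_nonneg (hαpos j).le ENNReal.toReal_nonneg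
      exact add_nonneg (sq_nonneg _) this
    exact (ENNReal.ofReal_le_ofReal_iff hbnn).mp h2
  -- F (m (Ψ n)).1 → y
  have hsq : Tendsto (fun n => ‖F (m (Ψ n)).1 - yδ (Ψ n)‖ ^ 2) atTop (𝓝 0) := by
    refine squeeze_zero (fun n => by positivity) (fun n => hres (Ψ n)) ?_
    exact hb0.comp hΨtop
  have hnrm : Tendsto (fun n => ‖F (m (Ψ n)).1 - yδ (Ψ n)‖) atTop (𝓝 0) := by
    have h1 : Tendsto (fun n => Real.sqrt (‖F (m (Ψ n)).1 - yδ (Ψ n)‖ ^ 2)) atTop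
        (𝓝 (Real.sqrt 0)) := (Real.continuous_sqrt.tendsto 0).comp hsq
    simpa [Real.sqrt_sq (norm_nonneg _)] using h1
  have hyδtend : Tendsto (fun n => yδ (Ψ n)) atTop (𝓝 y) := by
    rw [tendsto_iff_norm_sub_tendsto_zero]
    refine squeeze_zero (fun n => norm_nonneg _) (fun n => hyδ (Ψ n)) (hδ.comp hΨtop)
  have hFtend : Tendsto (fun n => F (m (Ψ n)).1) atTop (𝓝 y) := by
    have hdiff : Tendsto (fun n => F (m (Ψ n)).1 - yδ (Ψ n)) atTop (𝓝 0) :=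
      tendsto_zero_iff_norm_tendsto_zero.mpr hnrm
    have := hdiff.add hyδtend
    simpa using this
  have hFtend2 : Tendsto (fun n => F (m (Ψ n)).1) atTop (𝓝 (F mdag.1)) := by
    exact (hF.tendsto mdag.1).comp ((continuous_fst.tendsto mdag).comp htend')
  have hFmdag : F mdag.1 = y := tendsto_nhds_unique hFtend2 hFtend
  -- optimality of mdag
  have hopt : ∀ q ∈ A, F q.1 = y → ρ mdag ≤ ρ q := by
    intro q hqA hqy
    by_cases hq : ρ q = ⊤
    · simp [hq]
    have hlb := hlsc (fun n => m (Ψ n)) mdag htend'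
    refine hlb.trans ?_
    have h2 : ∀ n, ρ (m (Ψ n)) ≤ ENNReal.ofReal (δ (Ψ n) ^ 2 / α (Ψ n)) + ρ q :=
      fun n => hkey _ q hqA hqy
    have h3 : Tendsto (fun n => ENNReal.ofReal (δ (Ψ n) ^ 2 / α (Ψ n)) + ρ q) atTop
        (𝓝 (0 + ρ q)) := by
      refine Tendsto.add ?_ tendsto_const_nhds
      have := (ENNReal.continuous_ofReal.tendsto 0).comp (hδα.comp hΨtop)
      simpa [Function.comp_def] using this
    rw [zero_add] at h3
    calc Filter.liminf (fun n => ρ (m (Ψ n))) atTop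
        ≤ Filter.liminf (fun n => ENNReal.ofReal (δ (Ψ n) ^ 2 / α (Ψ n)) + ρ q) atTop :=
          liminf_le_liminf (Filter.Eventually.of_forall h2)
      _ = ρ q := h3.liminf_eq
  refine ⟨Ψ, hΨ, mdag, hmdagA, hFmdag, ?_, htend'⟩
  refine le_antisymm ?_ ?_
  · exact le_iInf fun q => hopt q.1 q.2.1 q.2.2
  · exact iInf_le (fun q : { q : Lp ℝ 1 μ × Lp ℝ 2 μ // q ∈ A ∧ F q.1 = y } => ρ q.1)
      ⟨mdag, hmdagA, hFmdag⟩
end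
end
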